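/- Let σ = {v_0,…,v_k} and σ̃ = {ṽ_0,…,ṽ_k} be k-simplices in ℝ^n with | ‖v_i − v_j‖ − ‖ṽ_i − ṽ_j‖ | ≤ C_0 L(σ) for all i < j, where C_0 = η Θ(σ)²/4 with 0 ≤ η ≤ 1. Let P, P̃ be the matrices of edge vectors from v_0 and ṽ_0 respectively. Then σ_k(P̃) ≥ (1 − η) σ_k(P) and Θ(σ̃) ≥ (4/(5√k)) (1 − η) Θ(σ). -/

import Mathlib

noncomputable section

open Metric Matrix

/-- The altitude of vertex `i` of the simplex with vertices `v`: the distance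
from `v i` to the affine hull of the opposite facet. -/
def altitude {m k : ℕ} (v : Fin (k + 1) → EuclideanSpace ℝ (Fin m)) (i : Fin (k + 1)) : ℝ :=
  Metric.infDist (v i) (affineSpan ℝ (v '' {j | j ≠ i}) : Set (EuclideanSpace ℝ (Fin m)))

/-- The longest edge length of the simplex with vertices `v`. -/
def longestEdge {m k : ℕ} (v : Fin (k + 1) → EuclideanSpace ℝ (Fin m)) : ℝ :=
  sSup {d : ℝ | ∃ i j, d = dist (v i) (v j)}

/-- The thickness of the simplex with vertices `v`. -/
def thickness {m k : ℕ} (v : Fin (k + 1) → EuclideanSpace ℝ (Fin m)) : ℝ :=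
  if k = 0 then 1 else (sInf (Set.range (altitude v))) / (k * longestEdge v)

/-- The `m × k` matrix whose `j`-th column is `v (j+1) - v 0`. -/
def edgeMat {m k : ℕ} (v : Fin (k + 1) → EuclideanSpace ℝ (Fin m)) :
    Matrix (Fin m) (Fin k) ℝ :=
  Matrix.of fun i j => (v j.succ - v 0) i

/-- The smallest singular value of a matrix: the infimum of `‖P x‖` over unit
vectors `x` (Euclidean norms). -/
def smallestSing {m k : ℕ} (P : Matrix (Fin m) (Fin k) ℝ) : ℝ :=
  sInf { r : ℝ | ∃ x : EuclideanSpace ℝ (Fin k), ‖x‖ = 1 ∧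
    r = ‖(EuclideanSpace.equiv (Fin m) ℝ).symm (P.mulVec (EuclideanSpace.equiv (Fin k) ℝ x))‖ }

/-!
The distances determine the Gram matrix `PᵀP` through
`⟪vᵢ - v₀, vⱼ - v₀⟫ = (‖vᵢ - v₀‖² + ‖vⱼ - v₀‖² - ‖vᵢ - vⱼ‖²) / 2`, so a small distortion of the
edge lengths moves every entry of `PᵀP` by `O(C₀ L²)`, hence `‖P x‖²` for unit `x` by
`O(k C₀ L²)`. On the other hand `σ_k(P) ≥ √k Θ L`: a unit `x` has a coordinate
`|xⱼ| ≥ 1 / √k`, and `‖P x‖ ≥ |xⱼ|` times the altitude of `vⱼ₊₁`. With `C₀ = η Θ² / 4` the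
perturbation is at most `(2η - η²) σ_k(P)²`, which gives the first bound. For the second, every
altitude is at least `σ_k` of the edge matrix based at a vertex of the opposite facet, and
relabelling the vertices turns the first bound into `(1 - η) √k Θ L` for all altitudes of `σ̃`,
while `L(σ̃) ≤ (1 + C₀) L ≤ 5 L / 4`.
-/

open scoped InnerProductSpace

section SmallestSing

variable {m k : ℕ} (P : Matrix (Fin m) (Fin k) ℝ)

lemma smallestSing_nonneg : 0 ≤ smallestSing P :=
  Real.sInf_nonneg (by rintro _ ⟨x, -, rfl⟩; exact norm_nonneg _)

lemma smallestSing_le_norm {x : EuclideanSpace ℝ (Fin k)} (hx : ‖x‖ = 1) :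
    smallestSing P ≤ ‖toEuclideanLin P x‖ :=
  csInf_le ⟨0, by rintro _ ⟨y, -, rfl⟩; exact norm_nonneg _⟩ ⟨x, hx, rfl⟩

lemma smallestSing_mul_norm_le (x : EuclideanSpace ℝ (Fin k)) :
    smallestSing P * ‖x‖ ≤ ‖toEuclideanLin P x‖ := by
  obtain rfl | hx := eq_or_ne x 0
  · simp
  have hx' : 0 < ‖x‖ := norm_pos_iff.2 hx
  have := smallestSing_le_norm P (x := ‖x‖⁻¹ • x) (by simp [norm_smul, hx'.ne'])
  rwa [map_smul, norm_smul, norm_inv, norm_norm, ← div_eq_inv_mul, le_div_iff₀ hx'] at this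

lemma le_smallestSing (hk : k ≠ 0) {c : ℝ}
    (h : ∀ x : EuclideanSpace ℝ (Fin k), ‖x‖ = 1 → c ≤ ‖toEuclideanLin P x‖) :
    c ≤ smallestSing P :=
  le_csInf ⟨_, EuclideanSpace.single ⟨0, Nat.pos_of_ne_zero hk⟩ 1, by simp, rfl⟩
    (by rintro _ ⟨x, hx, rfl⟩; exact h x hx)

lemma smallestSing_of_fin_zero (P : Matrix (Fin m) (Fin 0) ℝ) : smallestSing P = 0 := by
  rw [smallestSing]
  convert Real.sInf_empty
  refine Set.eq_empty_of_forall_notMem ?_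
  rintro _ ⟨x, hx, -⟩
  simp [Subsingleton.elim x 0] at hx

end SmallestSing

section Gram

variable {E ι : Type*} [NormedAddCommGroup E] [InnerProductSpace ℝ E] [Fintype ι]

lemma real_inner_sub_sub_eq_dist_sq (a b o : E) :
    ⟪a - o, b - o⟫_ℝ = (dist a o ^ 2 + dist b o ^ 2 - dist a b ^ 2) / 2 := by
  have h := norm_sub_sq_real (a - o) (b - o)
  rw [sub_sub_sub_cancel_right] at h
  rw [dist_eq_norm, dist_eq_norm, dist_eq_norm]
  linarith

lemma norm_sum_smul_sq (p : ι → E) (x : ι → ℝ) :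
    ‖∑ l, x l • p l‖ ^ 2 = ∑ a, ∑ b, x a * x b * ⟪p a, p b⟫_ℝ := by
  rw [← real_inner_self_eq_norm_sq, sum_inner, Finset.sum_congr rfl fun a _ => inner_sum _ _ _]
  simp only [real_inner_smul_left, real_inner_smul_right]
  exact Finset.sum_congr rfl fun a _ => Finset.sum_congr rfl fun b _ => by ring

lemma abs_norm_sum_smul_sq_sub_le (p q : ι → E) {ε : ℝ}
    (h : ∀ a b, |⟪q a, q b⟫_ℝ - ⟪p a, p b⟫_ℝ| ≤ ε) (x : EuclideanSpace ℝ ι) :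
    |‖∑ l, x l • q l‖ ^ 2 - ‖∑ l, x l • p l‖ ^ 2| ≤ ε * Fintype.card ι * ‖x‖ ^ 2 := by
  rcases isEmpty_or_nonempty ι with hι | ⟨⟨a₀⟩⟩
  · simp
  have hε : 0 ≤ ε := (abs_nonneg _).trans (h a₀ a₀)
  calc |‖∑ l, x l • q l‖ ^ 2 - ‖∑ l, x l • p l‖ ^ 2|
      = |∑ a, ∑ b, x a * x b * (⟪q a, q b⟫_ℝ - ⟪p a, p b⟫_ℝ)| := by
        simp only [norm_sum_smul_sq, mul_sub, Finset.sum_sub_distrib]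
    _ ≤ ∑ a, ∑ b, |x a| * |x b| * ε := by
        refine (Finset.abs_sum_le_sum_abs _ _).trans <| Finset.sum_le_sum fun a _ =>
          (Finset.abs_sum_le_sum_abs _ _).trans <| Finset.sum_le_sum fun b _ => ?_
        rw [abs_mul, abs_mul]
        exact mul_le_mul_of_nonneg_left (h a b) (by positivity)
    _ = ε * (∑ a, |x a|) ^ 2 := by
        rw [sq, Finset.sum_mul_sum, mul_comm, Finset.sum_mul]
        simp only [Finset.sum_mul]
    _ ≤ ε * (Fintype.card ι * ∑ a, x a ^ 2) := by
        gcongr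
        simpa using sq_sum_le_card_mul_sum_sq (s := Finset.univ) (f := fun a => |x a|)
    _ = ε * Fintype.card ι * ‖x‖ ^ 2 := by rw [EuclideanSpace.real_norm_sq_eq, mul_assoc]

end Gram

lemma abs_sq_sub_sq_le {d e L δ : ℝ} (hd : 0 ≤ d) (hdL : d ≤ L) (he : 0 ≤ e) (h : |d - e| ≤ δ) :
    |e ^ 2 - d ^ 2| ≤ δ * (2 * L + δ) := by
  rw [sq_sub_sq, abs_mul, abs_of_nonneg (add_nonneg he hd), abs_sub_comm, mul_comm]
  have hδ : 0 ≤ δ := (abs_nonneg _).trans h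
  exact mul_le_mul h (by linarith [(abs_le.1 h).1]) (add_nonneg he hd) hδ

section Simplex

variable {n k : ℕ} (v : Fin (k + 1) → EuclideanSpace ℝ (Fin n))

lemma toEuclideanLin_edgeMat (x : EuclideanSpace ℝ (Fin k)) :
    toEuclideanLin (edgeMat v) x = ∑ l, x l • (v l.succ - v 0) := by
  ext i
  simp [edgeMat, Matrix.mulVec, dotProduct, mul_comm]

lemma toEuclideanLin_edgeMat_single (j : Fin k) :
    toEuclideanLin (edgeMat v) (EuclideanSpace.single j 1) = v j.succ - v 0 := by
  simp [toEuclideanLin_edgeMat]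

lemma mem_affineSpan_facet_iff {j : Fin k} {q : EuclideanSpace ℝ (Fin n)} :
    q ∈ affineSpan ℝ (v '' {l | l ≠ j.succ}) ↔
      ∃ y : EuclideanSpace ℝ (Fin k), y j = 0 ∧ q = v 0 + toEuclideanLin (edgeMat v) y := by
  have h0 : v 0 ∈ affineSpan ℝ (v '' {l | l ≠ j.succ}) :=
    subset_affineSpan ℝ _ ⟨0, (Fin.succ_ne_zero j).symm, rfl⟩
  constructor
  · intro hq
    have hle : affineSpan ℝ (v '' {l | l ≠ j.succ}) ≤ AffineSubspace.mk' (v 0)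
        ((LinearMap.ker (EuclideanSpace.proj (𝕜 := ℝ) j).toLinearMap).map
          (toEuclideanLin (edgeMat v))) := by
      refine affineSpan_le.2 ?_
      rintro _ ⟨l, hl, rfl⟩
      rw [SetLike.mem_coe, AffineSubspace.mem_mk']
      cases l using Fin.cases with
      | zero => simp
      | succ m =>
        refine ⟨EuclideanSpace.single m 1, ?_, toEuclideanLin_edgeMat_single v m⟩
        simpa [eq_comm] using hl
    obtain ⟨y, hy, hyq⟩ := AffineSubspace.mem_mk'.1 (hle hq)
    exact ⟨y, hy, by rw [hyq, vsub_eq_sub, add_sub_cancel]⟩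
  · rintro ⟨y, hy, rfl⟩
    have hdir :
        toEuclideanLin (edgeMat v) y ∈ (affineSpan ℝ (v '' {l | l ≠ j.succ})).direction := by
      rw [toEuclideanLin_edgeMat]
      refine Submodule.sum_mem _ fun l _ => ?_
      obtain rfl | hl := eq_or_ne l j
      · simp [hy]
      · refine Submodule.smul_mem _ _ (AffineSubspace.vsub_mem_direction ?_ h0)
        exact subset_affineSpan ℝ _ ⟨l.succ, by simpa using hl, rfl⟩
    simpa [add_comm] using AffineSubspace.vadd_mem_of_mem_direction hdir h0

lemma abs_apply_mul_altitude_succ_le (x : EuclideanSpace ℝ (Fin k)) (j : Fin k) :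
    |x j| * altitude v j.succ ≤ ‖toEuclideanLin (edgeMat v) x‖ := by
  obtain hxj | hxj := eq_or_ne (x j) 0
  · simp [hxj]
  set y := EuclideanSpace.single j 1 - (x j)⁻¹ • x
  have hq : v 0 + toEuclideanLin (edgeMat v) y ∈ affineSpan ℝ (v '' {l | l ≠ j.succ}) :=
    (mem_affineSpan_facet_iff v).2 ⟨y, by simp [y, hxj], rfl⟩
  rw [← le_inv_mul_iff₀ (abs_pos.2 hxj)]
  calc altitude v j.succ ≤ dist (v j.succ) (v 0 + toEuclideanLin (edgeMat v) y) :=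
        infDist_le_dist_of_mem hq
    _ = ‖(x j)⁻¹ • toEuclideanLin (edgeMat v) x‖ := by
        rw [dist_eq_norm, map_sub, map_smul, toEuclideanLin_edgeMat_single]
        congr 1
        abel
    _ = |x j|⁻¹ * ‖toEuclideanLin (edgeMat v) x‖ := by
        rw [norm_smul, norm_inv, Real.norm_eq_abs]

lemma smallestSing_le_altitude_succ (j : Fin k) : smallestSing (edgeMat v) ≤ altitude v j.succ := by
  unfold altitude
  have hne : (affineSpan ℝ (v '' {l | l ≠ j.succ}) : Set (EuclideanSpace ℝ (Fin n))).Nonempty :=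
    ⟨v 0, subset_affineSpan ℝ _ ⟨0, (Fin.succ_ne_zero j).symm, rfl⟩⟩
  refine (le_infDist hne).2 fun q hq => ?_
  obtain ⟨y, hy, rfl⟩ := (mem_affineSpan_facet_iff v).1 hq
  have hy1 : 1 ≤ ‖EuclideanSpace.single j 1 - y‖ := by
    simpa [hy] using PiLp.norm_apply_le (EuclideanSpace.single j (1 : ℝ) - y) j
  calc smallestSing (edgeMat v)
      ≤ smallestSing (edgeMat v) * ‖EuclideanSpace.single j 1 - y‖ :=
        le_mul_of_one_le_right (smallestSing_nonneg _) hy1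
    _ ≤ ‖toEuclideanLin (edgeMat v) (EuclideanSpace.single j 1 - y)‖ :=
        smallestSing_mul_norm_le _ _
    _ = dist (v j.succ) (v 0 + toEuclideanLin (edgeMat v) y) := by
        rw [dist_eq_norm, map_sub, toEuclideanLin_edgeMat_single]
        congr 1
        abel

lemma finite_edgeLengths : {d : ℝ | ∃ i j, d = dist (v i) (v j)}.Finite :=
  (Set.finite_range fun p : Fin (k + 1) × Fin (k + 1) => dist (v p.1) (v p.2)).subset
    (by rintro _ ⟨i, j, rfl⟩; exact ⟨(i, j), rfl⟩)

lemma dist_le_longestEdge (i j : Fin (k + 1)) : dist (v i) (v j) ≤ longestEdge v :=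
  le_csSup (finite_edgeLengths v).bddAbove ⟨i, j, rfl⟩

lemma longestEdge_nonneg : 0 ≤ longestEdge v :=
  dist_self (v 0) ▸ dist_le_longestEdge v 0 0

lemma longestEdge_le {M : ℝ} (h : ∀ i j, dist (v i) (v j) ≤ M) : longestEdge v ≤ M :=
  csSup_le ⟨_, 0, 0, rfl⟩ (by rintro _ ⟨i, j, rfl⟩; exact h i j)

lemma abs_longestEdge_sub_le (w : Fin (k + 1) → EuclideanSpace ℝ (Fin n)) {δ : ℝ}
    (h : ∀ i j, |dist (v i) (v j) - dist (w i) (w j)| ≤ δ) :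
    |longestEdge v - longestEdge w| ≤ δ := by
  rw [abs_sub_le_iff, sub_le_iff_le_add, sub_le_iff_le_add]
  constructor
  · refine longestEdge_le v fun i j => ?_
    linarith [(abs_le.1 (h i j)).2, dist_le_longestEdge w i j]
  · refine longestEdge_le w fun i j => ?_
    linarith [(abs_le.1 (h i j)).1, dist_le_longestEdge v i j]

lemma longestEdge_comp_perm (π : Equiv.Perm (Fin (k + 1))) :
    longestEdge (v ∘ π) = longestEdge v := by
  unfold longestEdge
  congr 1
  ext d
  constructor
  · rintro ⟨i, j, rfl⟩
    exact ⟨π i, π j, rfl⟩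
  · rintro ⟨i, j, rfl⟩
    exact ⟨π.symm i, π.symm j, by simp⟩

lemma altitude_le_dist {i j : Fin (k + 1)} (h : j ≠ i) : altitude v i ≤ dist (v i) (v j) :=
  infDist_le_dist_of_mem (subset_affineSpan ℝ _ ⟨j, h, rfl⟩)

lemma altitude_comp_perm (π : Equiv.Perm (Fin (k + 1))) (i : Fin (k + 1)) :
    altitude (v ∘ π) i = altitude v (π i) := by
  have : π '' {j | j ≠ i} = {j | j ≠ π i} := by
    ext j
    simp [π.image_eq_preimage_symm, π.symm_apply_eq]
  rw [altitude, altitude, Set.image_comp, this, Function.comp_apply]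

lemma altitude_nonneg (i : Fin (k + 1)) : 0 ≤ altitude v i :=
  infDist_nonneg

lemma sInf_range_altitude_le (i : Fin (k + 1)) : sInf (Set.range (altitude v)) ≤ altitude v i :=
  ciInf_le (Set.finite_range _).bddBelow i

lemma thickness_comp_perm (π : Equiv.Perm (Fin (k + 1))) : thickness (v ∘ π) = thickness v := by
  have : Set.range (altitude (v ∘ π)) = Set.range (altitude v) := by
    rw [show altitude (v ∘ π) = altitude v ∘ π from funext (altitude_comp_perm v π)]
    exact π.surjective.range_comp _
  simp only [thickness, this, longestEdge_comp_perm]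

lemma thickness_nonneg : 0 ≤ thickness v := by
  unfold thickness
  split_ifs
  · exact zero_le_one
  · have := longestEdge_nonneg v
    exact div_nonneg (Real.sInf_nonneg <| by rintro _ ⟨i, rfl⟩; exact altitude_nonneg v i)
      (by positivity)

lemma thickness_le_one : thickness v ≤ 1 := by
  unfold thickness
  split_ifs with hk
  · rfl
  have hk1 : (1 : ℝ) ≤ k := Nat.one_le_cast.2 (Nat.pos_of_ne_zero hk)
  have hL := longestEdge_nonneg v
  set j : Fin k := ⟨0, Nat.pos_of_ne_zero hk⟩
  refine div_le_one_of_le₀ ?_ (by positivity)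
  calc sInf (Set.range (altitude v)) ≤ altitude v 0 := sInf_range_altitude_le v 0
    _ ≤ dist (v 0) (v j.succ) := altitude_le_dist v (Fin.succ_ne_zero j)
    _ ≤ longestEdge v := dist_le_longestEdge v _ _
    _ ≤ k * longestEdge v := le_mul_of_one_le_left hL hk1

lemma thickness_eq_zero_of_longestEdge_eq_zero (hk : k ≠ 0) (hL : longestEdge v = 0) :
    thickness v = 0 := by
  simp [thickness, hk, hL]

lemma natCast_mul_longestEdge_mul_thickness_le_altitude (hk : k ≠ 0) (i : Fin (k + 1)) :
    k * longestEdge v * thickness v ≤ altitude v i := by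
  rw [thickness, if_neg hk]
  obtain hL | hL := (mul_nonneg (Nat.cast_nonneg k) (longestEdge_nonneg v)).eq_or_lt
  · rw [← hL, zero_mul]
    exact altitude_nonneg v i
  · rw [mul_div_cancel₀ _ hL.ne']
    exact sInf_range_altitude_le v i

lemma div_le_thickness (hk : k ≠ 0) {a M : ℝ} (ha : 0 ≤ a) (halt : ∀ i, a ≤ altitude v i)
    (hL : 0 < longestEdge v) (hLM : longestEdge v ≤ M) : a / (k * M) ≤ thickness v := by
  have hk' : (0 : ℝ) < k := Nat.cast_pos.2 (Nat.pos_of_ne_zero hk)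
  rw [thickness, if_neg hk]
  exact div_le_div₀ (ha.trans (le_ciInf halt)) (le_ciInf halt) (by positivity) (by gcongr)

lemma mul_sq_thickness_le_one {η : ℝ} (hη1 : η ≤ 1) : η * thickness v ^ 2 ≤ 1 :=
  mul_le_one₀ hη1 (sq_nonneg _) (pow_le_one₀ (thickness_nonneg v) (thickness_le_one v))

theorem sqrt_mul_thickness_mul_longestEdge_le_smallestSing :
    √k * thickness v * longestEdge v ≤ smallestSing (edgeMat v) := by
  obtain rfl | hk := eq_or_ne k 0
  · simpa using smallestSing_nonneg _
  have hk' : (0 : ℝ) < k := Nat.cast_pos.2 (Nat.pos_of_ne_zero hk)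
  have hΘL : 0 ≤ thickness v * longestEdge v :=
    mul_nonneg (thickness_nonneg v) (longestEdge_nonneg v)
  refine le_smallestSing _ hk fun x hx => ?_
  obtain ⟨j, -, hj⟩ : ∃ j ∈ Finset.univ, 1 / (k : ℝ) ≤ x j ^ 2 := by
    refine Finset.exists_le_of_sum_le ⟨⟨0, Nat.pos_of_ne_zero hk⟩, Finset.mem_univ _⟩ ?_
    rw [← EuclideanSpace.real_norm_sq_eq, hx]
    simp [hk'.ne']
  have hxj : √k ≤ |x j| * k := by
    rw [Real.sqrt_le_left (by positivity), mul_pow, sq_abs]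
    calc (k : ℝ) = 1 / k * k ^ 2 := by field_simp
      _ ≤ x j ^ 2 * k ^ 2 := by gcongr
  calc √k * thickness v * longestEdge v ≤ |x j| * k * (thickness v * longestEdge v) := by
        rw [mul_assoc]
        gcongr
    _ = |x j| * (k * longestEdge v * thickness v) := by ring
    _ ≤ |x j| * altitude v j.succ := by
        gcongr
        exact natCast_mul_longestEdge_mul_thickness_le_altitude v hk _
    _ ≤ ‖toEuclideanLin (edgeMat v) x‖ := abs_apply_mul_altitude_succ_le v x j

variable (vt : Fin (k + 1) → EuclideanSpace ℝ (Fin n))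

lemma abs_norm_edgeMat_sq_sub_le {δ : ℝ}
    (hdist : ∀ i j, |dist (v i) (v j) - dist (vt i) (vt j)| ≤ δ) (x : EuclideanSpace ℝ (Fin k)) :
    |‖toEuclideanLin (edgeMat vt) x‖ ^ 2 - ‖toEuclideanLin (edgeMat v) x‖ ^ 2| ≤
      3 / 2 * (δ * (2 * longestEdge v + δ)) * k * ‖x‖ ^ 2 := by
  have hsq : ∀ i j, |dist (vt i) (vt j) ^ 2 - dist (v i) (v j) ^ 2| ≤
      δ * (2 * longestEdge v + δ) :=
    fun i j => abs_sq_sub_sq_le dist_nonneg (dist_le_longestEdge v i j) dist_nonneg (hdist i j)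
  have hgram : ∀ a b : Fin k, |⟪vt a.succ - vt 0, vt b.succ - vt 0⟫_ℝ -
      ⟪v a.succ - v 0, v b.succ - v 0⟫_ℝ| ≤ 3 / 2 * (δ * (2 * longestEdge v + δ)) := by
    intro a b
    simp only [real_inner_sub_sub_eq_dist_sq]
    have ha := abs_le.1 (hsq a.succ 0)
    have hb := abs_le.1 (hsq b.succ 0)
    have hab := abs_le.1 (hsq a.succ b.succ)
    rw [abs_le]
    constructor <;> linarith [ha.1, ha.2, hb.1, hb.2, hab.1, hab.2]
  simpa only [toEuclideanLin_edgeMat, Fintype.card_fin] using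
    abs_norm_sum_smul_sq_sub_le (fun l : Fin k => v l.succ - v 0)
      (fun l : Fin k => vt l.succ - vt 0) hgram x

variable {η : ℝ}

theorem one_sub_mul_smallestSing_le (hη0 : 0 ≤ η) (hη1 : η ≤ 1)
    (hdist : ∀ i j, |dist (v i) (v j) - dist (vt i) (vt j)| ≤
      η * thickness v ^ 2 / 4 * longestEdge v) :
    (1 - η) * smallestSing (edgeMat v) ≤ smallestSing (edgeMat vt) := by
  obtain rfl | hk := eq_or_ne k 0
  · rw [smallestSing_of_fin_zero, smallestSing_of_fin_zero, mul_zero]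
  have hk' : (0 : ℝ) < k := Nat.cast_pos.2 (Nat.pos_of_ne_zero hk)
  set Θ := thickness v
  set L := longestEdge v
  set s := smallestSing (edgeMat v)
  set δ := η * Θ ^ 2 / 4 * L with hδ_def
  have hs0 : 0 ≤ s := smallestSing_nonneg _
  have hs2 : k * Θ ^ 2 * L ^ 2 ≤ s ^ 2 := by
    have := pow_le_pow_left₀ (mul_nonneg (mul_nonneg (Real.sqrt_nonneg _) (thickness_nonneg v))
      (longestEdge_nonneg v)) (sqrt_mul_thickness_mul_longestEdge_le_smallestSing v) 2
    rwa [mul_pow, mul_pow, Real.sq_sqrt hk'.le] at this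
  have hηΘ : η * Θ ^ 2 ≤ 1 := mul_sq_thickness_le_one v hη1
  -- `(1 - η)² = 1 - (2η - η²)`, and `2η - η²` absorbs the perturbation of `‖P x‖²`.
  have hbudget : 3 / 2 * (δ * (2 * L + δ)) * k ≤ (2 * η - η ^ 2) * s ^ 2 :=
    calc 3 / 2 * (δ * (2 * L + δ)) * k
        = 3 / 8 * η * (2 + η * Θ ^ 2 / 4) * (k * Θ ^ 2 * L ^ 2) := by rw [hδ_def]; ring
      _ ≤ 3 / 8 * η * (9 / 4) * s ^ 2 := by gcongr; linarith
      _ ≤ (2 * η - η ^ 2) * s ^ 2 := by gcongr; nlinarith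
  refine le_smallestSing _ hk fun x hx => ?_
  have hPx : s ≤ ‖toEuclideanLin (edgeMat v) x‖ := by
    simpa [hx] using smallestSing_mul_norm_le (edgeMat v) x
  have hdiff := abs_le.1 (abs_norm_edgeMat_sq_sub_le v vt hdist x)
  rw [hx, one_pow, mul_one] at hdiff
  rw [← pow_le_pow_iff_left₀ (mul_nonneg (sub_nonneg.2 hη1) hs0) (norm_nonneg _) two_ne_zero]
  have hsplit : ((1 - η) * s) ^ 2 = s ^ 2 - (2 * η - η ^ 2) * s ^ 2 := by ring
  linarith [pow_le_pow_left₀ hs0 hPx 2]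

theorem one_sub_mul_le_altitude (hk : k ≠ 0) (hη0 : 0 ≤ η) (hη1 : η ≤ 1)
    (hdist : ∀ i j, |dist (v i) (v j) - dist (vt i) (vt j)| ≤
      η * thickness v ^ 2 / 4 * longestEdge v) (i : Fin (k + 1)) :
    (1 - η) * (√k * thickness v * longestEdge v) ≤ altitude vt i := by
  set j : Fin k := ⟨0, Nat.pos_of_ne_zero hk⟩
  set π := Equiv.swap j.succ i
  have hdistπ : ∀ a b, |dist ((v ∘ π) a) ((v ∘ π) b) - dist ((vt ∘ π) a) ((vt ∘ π) b)| ≤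
      η * thickness (v ∘ π) ^ 2 / 4 * longestEdge (v ∘ π) := by
    rw [thickness_comp_perm, longestEdge_comp_perm]
    exact fun a b => hdist (π a) (π b)
  calc (1 - η) * (√k * thickness v * longestEdge v)
      = (1 - η) * (√k * thickness (v ∘ π) * longestEdge (v ∘ π)) := by
        rw [thickness_comp_perm, longestEdge_comp_perm]
    _ ≤ (1 - η) * smallestSing (edgeMat (v ∘ π)) :=
        mul_le_mul_of_nonneg_left (sqrt_mul_thickness_mul_longestEdge_le_smallestSing _)
          (sub_nonneg.2 hη1)
    _ ≤ smallestSing (edgeMat (vt ∘ π)) := one_sub_mul_smallestSing_le _ _ hη0 hη1 hdistπ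
    _ ≤ altitude (vt ∘ π) j.succ := smallestSing_le_altitude_succ _ j
    _ = altitude vt i := by rw [altitude_comp_perm, Equiv.swap_apply_left]

theorem div_mul_thickness_le_thickness (hη0 : 0 ≤ η) (hη1 : η ≤ 1)
    (hdist : ∀ i j, |dist (v i) (v j) - dist (vt i) (vt j)| ≤
      η * thickness v ^ 2 / 4 * longestEdge v) :
    4 / (5 * √k) * (1 - η) * thickness v ≤ thickness vt := by
  obtain rfl | hk := eq_or_ne k 0
  · rw [Nat.cast_zero, Real.sqrt_zero, mul_zero, div_zero, zero_mul, zero_mul]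
    exact thickness_nonneg vt
  obtain hL | hL := (longestEdge_nonneg v).eq_or_lt
  · rw [thickness_eq_zero_of_longestEdge_eq_zero v hk hL.symm, mul_zero]
    exact thickness_nonneg vt
  have hk' : (0 : ℝ) < k := Nat.cast_pos.2 (Nat.pos_of_ne_zero hk)
  have hδ : η * thickness v ^ 2 / 4 * longestEdge v ≤ longestEdge v / 4 := by
    have := mul_sq_thickness_le_one v hη1
    nlinarith
  have hedge := abs_le.1 (abs_longestEdge_sub_le v vt hdist)
  have hΘ0 := thickness_nonneg v
  have hsqrt : 0 < √(k : ℝ) := Real.sqrt_pos.2 hk'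
  calc 4 / (5 * √k) * (1 - η) * thickness v
      = (1 - η) * (√k * thickness v * longestEdge v) / (k * (5 / 4 * longestEdge v)) := by
        field_simp
        rw [Real.sq_sqrt hk'.le]
        ring
    _ ≤ thickness vt :=
        div_le_thickness vt hk (by positivity) (one_sub_mul_le_altitude v vt hk hη0 hη1 hdist)
          (by linarith) (by linarith)

end Simplex

lemma forall_abs_dist_sub_dist_le {n k : ℕ} {v w : Fin (k + 1) → EuclideanSpace ℝ (Fin n)} {δ : ℝ}
    (hδ : 0 ≤ δ) (h : ∀ i j, i < j → |dist (v i) (v j) - dist (w i) (w j)| ≤ δ)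
    (i j : Fin (k + 1)) :
    |dist (v i) (v j) - dist (w i) (w j)| ≤ δ := by
  rcases lt_trichotomy i j with hij | rfl | hji
  · exact h i j hij
  · simpa only [dist_self, sub_self, abs_zero] using hδ
  · simpa only [dist_comm] using h j i hji

/-- **Thickness under distortion.** -/
theorem thickness_under_distortion {n k : ℕ}
    (v vt : Fin (k + 1) → EuclideanSpace ℝ (Fin n)) (C₀ η : ℝ)
    (hη0 : 0 ≤ η) (hη1 : η ≤ 1) (hC₀ : C₀ = η * thickness v ^ 2 / 4)
    (hdist : ∀ i j : Fin (k + 1), i < j →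
      |dist (v i) (v j) - dist (vt i) (vt j)| ≤ C₀ * longestEdge v) :
    smallestSing (edgeMat vt) ≥ (1 - η) * smallestSing (edgeMat v) ∧
    thickness vt ≥ 4 / (5 * Real.sqrt k) * (1 - η) * thickness v := by
  subst hC₀
  have hδ : 0 ≤ η * thickness v ^ 2 / 4 * longestEdge v := by
    have := thickness_nonneg v
    have := longestEdge_nonneg v
    positivity
  have hdist' := forall_abs_dist_sub_dist_le hδ hdist
  exact ⟨one_sub_mul_smallestSing_le v vt hη0 hη1 hdist',
    div_mul_thickness_le_thickness v vt hη0 hη1 hdist'⟩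

end
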